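/- arXiv:2409.09104 — 4 statements merged into one kernel-verified Lean document; each statement's English description precedes it below -/
import Mathlib

section
/- Let n, k, p be positive integers, let Q₁ ∈ ℝ^{n×k} and Q₂ ∈ ℝ^{n×(k+1)} have orthonormal columns (Q₁ᵀQ₁ = I_k, Q₂ᵀQ₂ = I_{k+1}), let M ∈ ℝ^{(k+1)×k} be such that MᵀM is invertible, let c ∈ ℝⁿ, and let L ∈ ℝ^{p×n}. Set B = Q₂ M Q₁ᵀ, x_k = Q₁ (MᵀM)⁻¹ Mᵀ Q₂ᵀ c, and P = I_n − Q₁Q₁ᵀ. Suppose z ∈ ℝⁿ satisfies: (i) ‖L P z − L x_k‖ ≤ ‖L P w − L x_k‖ for all w ∈ ℝⁿ (z is a least squares solution of min_w ‖(LP)w − Lx_k‖), and (ii) z lies in the column space of (LP)ᵀ. Then x_{L,k} := x_k − z satisfies: (a) ‖B x_{L,k} − c‖ ≤ ‖B x − c‖ for all x ∈ ℝⁿ, and (b) for every x ∈ ℝⁿ with ‖B x − c‖ ≤ ‖B w − c‖ for all w ∈ ℝⁿ, one has ‖L x_{L,k}‖ ≤ ‖L x‖. That is, x_{L,k} = x_k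 − (L(I_n − Q₁Q₁ᵀ))† L x_k solves min ‖Lx‖ subject to x being a least squares solution of ‖Bx − c‖. -/
open Matrix

/-- Euclidean 2-norm of a vector in `ℝ^d`. -/
noncomputable def enorm₂ {d : ℕ} (v : Fin d → ℝ) : ℝ := Real.sqrt (∑ i, v i ^ 2)

/-!
`Q₁ (MᵀM)⁻¹ Mᵀ Q₂ᵀ` is the pseudoinverse of `B = Q₂ M Q₁ᵀ`, so `x_k` satisfies the normal
equations of `‖Bx - c‖`, and by Pythagoras every least squares solution is `x_k + v` with
`Bv = 0`, hence with `Pv = v` because `B†B = Q₁Q₁ᵀ`. On these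
`‖L(x_k + v)‖ = ‖(LP)(-v) - Lx_k‖`, which the inner least squares problem bounds below by
`‖(LP)z - Lx_k‖ = ‖L(x_k - z)‖`, because `z` lies in the range of `P`. The same fact gives
`Bz = 0`, so `x_k - z` is itself a least squares solution.
-/

section EuclideanNorm

variable {d : ℕ}

lemma enorm₂_eq_sqrt_dotProduct (v : Fin d → ℝ) : enorm₂ v = √(v ⬝ᵥ v) := by
  simp [enorm₂, dotProduct, sq]

lemma enorm₂_le_enorm₂_iff {u v : Fin d → ℝ} : enorm₂ u ≤ enorm₂ v ↔ u ⬝ᵥ u ≤ v ⬝ᵥ v := by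
  rw [enorm₂_eq_sqrt_dotProduct, enorm₂_eq_sqrt_dotProduct]
  exact Real.sqrt_le_sqrt_iff (by simpa using dotProduct_self_star_nonneg v)

lemma enorm₂_neg (v : Fin d → ℝ) : enorm₂ (-v) = enorm₂ v := by
  simp [enorm₂]

end EuclideanNorm

def IsLeastSquares {m : ℕ} {ι : Type*} [Fintype ι] (A : Matrix (Fin m) ι ℝ) (b : Fin m → ℝ)
    (x : ι → ℝ) : Prop :=
  ∀ y, enorm₂ (A *ᵥ x - b) ≤ enorm₂ (A *ᵥ y - b)

section NormalEquations

variable {R m ι : Type*} [CommRing R] [Fintype m] [Fintype ι]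

lemma dotProduct_self_sub_of_transpose_mulVec_sub_eq_zero {A : Matrix m ι R} {b : m → R}
    {x : ι → R} (hx : Aᵀ *ᵥ (A *ᵥ x - b) = 0) (y : ι → R) :
    (A *ᵥ y - b) ⬝ᵥ (A *ᵥ y - b) =
      (A *ᵥ x - b) ⬝ᵥ (A *ᵥ x - b) + (A *ᵥ (y - x)) ⬝ᵥ (A *ᵥ (y - x)) := by
  have hres : A *ᵥ y - b = (A *ᵥ x - b) + A *ᵥ (y - x) := by
    rw [mulVec_sub]; abel
  have horth : (A *ᵥ x - b) ⬝ᵥ (A *ᵥ (y - x)) = 0 := by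
    rw [dotProduct_mulVec, ← mulVec_transpose, hx, zero_dotProduct]
  rw [hres, add_dotProduct, dotProduct_add, dotProduct_add, dotProduct_comm (A *ᵥ (y - x)), horth]
  ring

end NormalEquations

section LeastSquares

variable {n : ℕ} {ι : Type*} [Fintype ι] {A : Matrix (Fin n) ι ℝ} {b : Fin n → ℝ} {x : ι → ℝ}

lemma isLeastSquares_of_transpose_mulVec_sub_eq_zero (hx : Aᵀ *ᵥ (A *ᵥ x - b) = 0) :
    IsLeastSquares A b x := fun y => by
  rw [enorm₂_le_enorm₂_iff, dotProduct_self_sub_of_transpose_mulVec_sub_eq_zero hx y]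
  simpa using dotProduct_self_star_nonneg (A *ᵥ (y - x))

lemma mulVec_sub_eq_zero_of_isLeastSquares (hx : Aᵀ *ᵥ (A *ᵥ x - b) = 0) {y : ι → ℝ}
    (hy : IsLeastSquares A b y) : A *ᵥ (y - x) = 0 := by
  have hle := enorm₂_le_enorm₂_iff.mp (hy x)
  rw [dotProduct_self_sub_of_transpose_mulVec_sub_eq_zero hx y] at hle
  have hnonneg : 0 ≤ (A *ᵥ (y - x)) ⬝ᵥ (A *ᵥ (y - x)) := by
    simpa using dotProduct_self_star_nonneg (A *ᵥ (y - x))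
  exact dotProduct_self_eq_zero.mp (by linarith)

lemma IsLeastSquares.sub_of_mulVec_eq_zero (hx : IsLeastSquares A b x) {z : ι → ℝ}
    (hz : A *ᵥ z = 0) : IsLeastSquares A b (x - z) := by
  simpa [IsLeastSquares, mulVec_sub, hz] using hx

lemma enorm₂_mulVec_sub_le_of_isLeastSquares {p : ℕ} {L : Matrix (Fin p) ι ℝ}
    {P : Matrix ι ι ℝ} {x₀ z v : ι → ℝ} (hz : IsLeastSquares (L * P) (L *ᵥ x₀) z)
    (hPz : P *ᵥ z = z) (hPv : P *ᵥ v = v) :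
    enorm₂ (L *ᵥ (x₀ - z)) ≤ enorm₂ (L *ᵥ (x₀ + v)) := by
  have hLz : L *ᵥ (x₀ - z) = -((L * P) *ᵥ z - L *ᵥ x₀) := by
    rw [← mulVec_mulVec, hPz, mulVec_sub, neg_sub]
  have hLv : L *ᵥ (x₀ + v) = -((L * P) *ᵥ (-v) - L *ᵥ x₀) := by
    rw [← mulVec_mulVec, mulVec_neg, hPv, mulVec_neg, neg_sub, sub_neg_eq_add, mulVec_add]
  rw [hLz, hLv, enorm₂_neg, enorm₂_neg]
  exact hz (-v)

end LeastSquares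

section Projection

variable {n k : Type*} [Fintype k] [DecidableEq n] {Q : Matrix n k ℝ}

lemma transpose_one_sub_mul_transpose (Q : Matrix n k ℝ) : (1 - Q * Qᵀ)ᵀ = 1 - Q * Qᵀ := by
  rw [transpose_sub, transpose_one, transpose_mul, transpose_transpose]

lemma transpose_mul_one_sub_mul_transpose [Fintype n] [DecidableEq k] (hQ : Qᵀ * Q = 1) :
    Qᵀ * (1 - Q * Qᵀ) = 0 := by
  rw [Matrix.mul_sub, Matrix.mul_one, ← Matrix.mul_assoc, hQ, Matrix.one_mul, sub_self]

lemma one_sub_mul_transpose_mul_self [Fintype n] [DecidableEq k] (hQ : Qᵀ * Q = 1) :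
    (1 - Q * Qᵀ) * (1 - Q * Qᵀ) = 1 - Q * Qᵀ := by
  rw [Matrix.sub_mul, Matrix.mul_assoc Q, transpose_mul_one_sub_mul_transpose hQ,
    Matrix.mul_zero, Matrix.one_mul, sub_zero]

end Projection

section Pseudoinverse

variable {n k k' m : Type*} [Fintype k] [Fintype k'] [Fintype m] [DecidableEq k] [DecidableEq k']
  {Q₁ : Matrix n k ℝ} {Q₂ : Matrix m k' ℝ} {M : Matrix k' k ℝ}

lemma pinv_mul_eq_mul_transpose (hQ₂ : Q₂ᵀ * Q₂ = 1) (hM : IsUnit (Mᵀ * M)) :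
    Q₁ * (Mᵀ * M)⁻¹ * Mᵀ * Q₂ᵀ * (Q₂ * M * Q₁ᵀ) = Q₁ * Q₁ᵀ := by
  simp only [Matrix.mul_assoc]
  rw [← Matrix.mul_assoc Q₂ᵀ, hQ₂, Matrix.one_mul, ← Matrix.mul_assoc Mᵀ,
    ← Matrix.mul_assoc (Mᵀ * M)⁻¹, Matrix.nonsing_inv_mul _ ((isUnit_iff_isUnit_det _).mp hM),
    Matrix.one_mul]

lemma transpose_mul_self_mul_pinv [Fintype n] (hQ₁ : Q₁ᵀ * Q₁ = 1) (hQ₂ : Q₂ᵀ * Q₂ = 1)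
    (hM : IsUnit (Mᵀ * M)) :
    (Q₂ * M * Q₁ᵀ)ᵀ * (Q₂ * M * Q₁ᵀ) * (Q₁ * (Mᵀ * M)⁻¹ * Mᵀ * Q₂ᵀ) = (Q₂ * M * Q₁ᵀ)ᵀ := by
  simp only [transpose_mul, transpose_transpose, Matrix.mul_assoc]
  rw [← Matrix.mul_assoc Q₁ᵀ, hQ₁, Matrix.one_mul, ← Matrix.mul_assoc Q₂ᵀ, hQ₂, Matrix.one_mul,
    ← Matrix.mul_assoc Mᵀ, ← Matrix.mul_assoc (Mᵀ * M),
    Matrix.mul_nonsing_inv _ ((isUnit_iff_isUnit_det _).mp hM), Matrix.one_mul]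

end Pseudoinverse

theorem hybrid_lsmr_solution_general
    (n k p : ℕ)
    (Q₁ : Matrix (Fin n) (Fin k) ℝ) (Q₂ : Matrix (Fin n) (Fin (k + 1)) ℝ)
    (M : Matrix (Fin (k + 1)) (Fin k) ℝ)
    (hQ₁ : Q₁ᵀ * Q₁ = 1) (hQ₂ : Q₂ᵀ * Q₂ = 1)
    (hM : IsUnit (Mᵀ * M)) (c : Fin n → ℝ)
    (L : Matrix (Fin p) (Fin n) ℝ) (z : Fin n → ℝ) :
    let B := Q₂ * M * Q₁ᵀ
    let xk := (Q₁ * (Mᵀ * M)⁻¹ * Mᵀ * Q₂ᵀ).mulVec c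
    let P : Matrix (Fin n) (Fin n) ℝ := 1 - Q₁ * Q₁ᵀ
    (∀ w : Fin n → ℝ,
        enorm₂ ((L * P).mulVec z - L.mulVec xk) ≤
          enorm₂ ((L * P).mulVec w - L.mulVec xk)) →
    (∃ u : Fin p → ℝ, z = (L * P)ᵀ.mulVec u) →
    ((∀ x : Fin n → ℝ,
        enorm₂ (B.mulVec (xk - z) - c) ≤ enorm₂ (B.mulVec x - c)) ∧
      ∀ x : Fin n → ℝ,
        (∀ w : Fin n → ℝ, enorm₂ (B.mulVec x - c) ≤ enorm₂ (B.mulVec w - c)) →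
          enorm₂ (L.mulVec (xk - z)) ≤ enorm₂ (L.mulVec x)) := by
  intro B xk P hz ⟨u, hzu⟩
  have hzP : z = P *ᵥ (Lᵀ *ᵥ u) := by
    rw [hzu, transpose_mul, transpose_one_sub_mul_transpose, mulVec_mulVec]
  have hPz : P *ᵥ z = z := by
    rw [hzP, mulVec_mulVec, one_sub_mul_transpose_mul_self hQ₁]
  have hBz : B *ᵥ z = 0 := by
    rw [hzP, mulVec_mulVec, Matrix.mul_assoc, transpose_mul_one_sub_mul_transpose hQ₁,
      Matrix.mul_zero, zero_mulVec]
  have hxk : Bᵀ *ᵥ (B *ᵥ xk - c) = 0 := by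
    simp only [B, xk]
    rw [mulVec_sub, mulVec_mulVec, mulVec_mulVec, transpose_mul_self_mul_pinv hQ₁ hQ₂ hM, sub_self]
  refine ⟨(isLeastSquares_of_transpose_mulVec_sub_eq_zero hxk).sub_of_mulVec_eq_zero hBz,
    fun x hx => ?_⟩
  have hPx : P *ᵥ (x - xk) = x - xk := by
    have hBx := mulVec_sub_eq_zero_of_isLeastSquares hxk hx
    rw [Matrix.sub_mulVec, Matrix.one_mulVec, ← pinv_mul_eq_mul_transpose hQ₂ hM, ← mulVec_mulVec,
      hBx, mulVec_zero, sub_zero]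
  simpa using enorm₂_mulVec_sub_le_of_isLeastSquares hz hPz hPx

/-- Theorem 3.1 of the paper: with `B = Q₂ M Q₁ᵀ`, `x_k = B† c`, and
`P = Iₙ - Q₁Q₁ᵀ`, if `z` is the minimum-norm least squares solution of
`min_w ‖(LP)w - L x_k‖` (i.e. `z = (LP)† L x_k`, characterized by being a least
squares solution lying in the column space of `(LP)ᵀ`), then
`x_{L,k} = x_k - z` solves `min ‖Lx‖` subject to `x` being a least squares
solution of `‖Bx - c‖`. -/
theorem hybrid_lsmr_solution
    (n k p : ℕ) (hn : 0 < n) (hk : 0 < k) (hp : 0 < p)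
    (Q₁ : Matrix (Fin n) (Fin k) ℝ) (Q₂ : Matrix (Fin n) (Fin (k + 1)) ℝ)
    (M : Matrix (Fin (k + 1)) (Fin k) ℝ)
    (hQ₁ : Q₁ᵀ * Q₁ = 1) (hQ₂ : Q₂ᵀ * Q₂ = 1)
    (hM : IsUnit (Mᵀ * M)) (c : Fin n → ℝ)
    (L : Matrix (Fin p) (Fin n) ℝ) (z : Fin n → ℝ) :
    let B := Q₂ * M * Q₁ᵀ
    let xk := (Q₁ * (Mᵀ * M)⁻¹ * Mᵀ * Q₂ᵀ).mulVec c
    let P : Matrix (Fin n) (Fin n) ℝ := 1 - Q₁ * Q₁ᵀ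
    (∀ w : Fin n → ℝ,
        enorm₂ ((L * P).mulVec z - L.mulVec xk) ≤
          enorm₂ ((L * P).mulVec w - L.mulVec xk)) →
    (∃ u : Fin p → ℝ, z = (L * P)ᵀ.mulVec u) →
    ((∀ x : Fin n → ℝ,
        enorm₂ (B.mulVec (xk - z) - c) ≤ enorm₂ (B.mulVec x - c)) ∧
      ∀ x : Fin n → ℝ,
        (∀ w : Fin n → ℝ, enorm₂ (B.mulVec x - c) ≤ enorm₂ (B.mulVec w - c)) →
          enorm₂ (L.mulVec (xk - z)) ≤ enorm₂ (L.mulVec x)) :=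
  hybrid_lsmr_solution_general n k p Q₁ Q₂ M hQ₁ hQ₂ hM c L z
end

section
/- (Theorem 3.2) Let n, k, p be positive integers with 2 ≤ k ≤ n − 2 and p ≥ n − k, let L ∈ ℝ^{p×n}, let W ∈ ℝ^{n×(n−k)}, and let W' ∈ ℝ^{n×(n−k−1)} be obtained from W by deleting one column. Define, for a matrix B, σ_max(B) = sSup{‖Bx‖ : ‖x‖ = 1} and σ_min(B) = sInf{‖Bx‖ : ‖x‖ = 1}. Assume σ_min(L W) > 0. Then σ_max(L W)/σ_min(L W) ≥ σ_max(L W')/σ_min(L W'); that is, κ(L Q_k^⊥) ≥ κ(L Q_{k+1}^⊥), so the condition number of the inner least squares coefficient matrix is non-increasing in k. -/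
/-!
Let `B'` be `B` with some columns deleted. Extending a unit vector `x'` by zeros in the deleted
coordinates gives a unit vector `x` with `B x = B' x'`, so the values `‖B' x'‖` on the unit sphere form a subset of the values
`‖B x‖`. Passing to a subset can only lower the supremum and raise the infimum, so
`σ_max(B') ≤ σ_max(B)` and `σ_min(B) ≤ σ_min(B')`, and the quotient can only decrease.
-/

open Matrix

/-- Euclidean 2-norm of a vector in `ℝ^d`. -/
noncomputable def vecEnorm {d : ℕ} (v : Fin d → ℝ) : ℝ := Real.sqrt (∑ i, v i ^ 2)

/-- The largest singular value `σ_max(B) = sup_{‖x‖=1} ‖Bx‖`. -/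
noncomputable def sigmaMax {p q : ℕ} (B : Matrix (Fin p) (Fin q) ℝ) : ℝ :=
  sSup {r : ℝ | ∃ x : Fin q → ℝ, vecEnorm x = 1 ∧ r = vecEnorm (B.mulVec x)}

/-- The smallest singular value `σ_min(B) = inf_{‖x‖=1} ‖Bx‖`. -/
noncomputable def sigmaMin {p q : ℕ} (B : Matrix (Fin p) (Fin q) ℝ) : ℝ :=
  sInf {r : ℝ | ∃ x : Fin q → ℝ, vecEnorm x = 1 ∧ r = vecEnorm (B.mulVec x)}

open Function

theorem Fintype.sum_extend_zero {ι κ α M : Type*} [Fintype ι] [Fintype κ] [Zero α]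
    [AddCommMonoid M] {f : ι → κ} (hf : Injective f) (x : ι → α) (g : κ → α → M)
    (hg : ∀ k, g k 0 = 0) : ∑ k, g k (extend f x 0 k) = ∑ i, g (f i) (x i) := by
  refine (Fintype.sum_of_injective f hf _ _ (fun k hk => ?_) (fun i => ?_)).symm
  · rw [extend_apply' _ _ _ (by simpa using hk), Pi.zero_apply, hg]
  · rw [hf.extend_apply]

theorem Matrix.mulVec_extend_zero {m n n' R : Type*} [Fintype n] [Fintype n']
    [NonUnitalNonAssocSemiring R] (B : Matrix m n R) {f : n' → n} (hf : Injective f)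
    (x : n' → R) : B *ᵥ extend f x 0 = B.submatrix id f *ᵥ x := by
  ext i
  exact Fintype.sum_extend_zero hf x (fun k t => B i k * t) fun _ => mul_zero _

theorem vecEnorm_extend_zero {d d' : ℕ} {f : Fin d' → Fin d} (hf : Injective f)
    (x : Fin d' → ℝ) : vecEnorm (extend f x 0) = vecEnorm x := by
  unfold vecEnorm
  rw [Fintype.sum_extend_zero hf x (fun _ t => t ^ 2) fun _ => zero_pow two_ne_zero]

theorem vecEnorm_eq_norm {d : ℕ} (v : Fin d → ℝ) :
    vecEnorm v = ‖(WithLp.toLp 2 v : EuclideanSpace ℝ (Fin d))‖ := by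
  simp [vecEnorm, EuclideanSpace.norm_eq]

open scoped Matrix.Norms.L2Operator in
theorem vecEnorm_mulVec_le {p q : ℕ} (B : Matrix (Fin p) (Fin q) ℝ) (x : Fin q → ℝ) :
    vecEnorm (B *ᵥ x) ≤ ‖B‖ * vecEnorm x := by
  rw [vecEnorm_eq_norm, vecEnorm_eq_norm]
  exact B.l2_opNorm_mulVec (WithLp.toLp 2 x)

-- `sigmaMax B` and `sigmaMin B` are, by definition, the `sSup` and `sInf` of this set.
def unitSphereImageNorms {p q : ℕ} (B : Matrix (Fin p) (Fin q) ℝ) : Set ℝ :=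
  {r : ℝ | ∃ x : Fin q → ℝ, vecEnorm x = 1 ∧ r = vecEnorm (B.mulVec x)}

section
variable {p q : ℕ} (B : Matrix (Fin p) (Fin q) ℝ)

theorem unitSphereImageNorms_submatrix_subset {q' : ℕ} {f : Fin q' → Fin q}
    (hf : Injective f) : unitSphereImageNorms (B.submatrix id f) ⊆ unitSphereImageNorms B := by
  rintro r ⟨x, hx, rfl⟩
  exact ⟨extend f x 0, by rw [vecEnorm_extend_zero hf, hx], by rw [B.mulVec_extend_zero hf]⟩

theorem nonneg_of_mem_unitSphereImageNorms : ∀ r ∈ unitSphereImageNorms B, 0 ≤ r := by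
  rintro r ⟨x, -, rfl⟩
  exact Real.sqrt_nonneg _

open scoped Matrix.Norms.L2Operator in
theorem bddAbove_unitSphereImageNorms : BddAbove (unitSphereImageNorms B) := by
  refine ⟨‖B‖, ?_⟩
  rintro r ⟨x, hx, rfl⟩
  simpa [hx] using vecEnorm_mulVec_le B x

theorem sigmaMax_submatrix_le {q' : ℕ} {f : Fin q' → Fin q} (hf : Injective f) :
    sigmaMax (B.submatrix id f) ≤ sigmaMax B :=
  Real.sSup_le (fun _ hr => le_csSup (bddAbove_unitSphereImageNorms B)
      (unitSphereImageNorms_submatrix_subset B hf hr))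
    (Real.sSup_nonneg (nonneg_of_mem_unitSphereImageNorms B))

theorem sigmaMin_le_sigmaMin_submatrix {q' : ℕ} {f : Fin q' → Fin q} (hf : Injective f)
    (hne : (unitSphereImageNorms (B.submatrix id f)).Nonempty) :
    sigmaMin B ≤ sigmaMin (B.submatrix id f) :=
  csInf_le_csInf ⟨0, nonneg_of_mem_unitSphereImageNorms B⟩ hne
    (unitSphereImageNorms_submatrix_subset B hf)

theorem sigmaMax_div_sigmaMin_submatrix_le {q' : ℕ} {f : Fin q' → Fin q} (hf : Injective f)
    (hmin : 0 < sigmaMin B) :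
    sigmaMax (B.submatrix id f) / sigmaMin (B.submatrix id f) ≤ sigmaMax B / sigmaMin B := by
  have hmax : 0 ≤ sigmaMax B := Real.sSup_nonneg (nonneg_of_mem_unitSphereImageNorms B)
  rcases (unitSphereImageNorms (B.submatrix id f)).eq_empty_or_nonempty with hempty | hne
  -- only when `q' = 0`; then `σ_min(B') = sInf ∅ = 0` and the left side is the junk `x / 0 = 0`
  · have : sigmaMin (B.submatrix id f) = 0 := by
      rw [sigmaMin, ← unitSphereImageNorms, hempty, Real.sInf_empty]
    rw [this, div_zero]
    exact div_nonneg hmax hmin.le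
  · exact div_le_div₀ hmax (sigmaMax_submatrix_le B hf) hmin
      (sigmaMin_le_sigmaMin_submatrix B hf hne)
end

theorem condition_number_nonincreasing_general
    (n k p : ℕ)
    (L : Matrix (Fin p) (Fin n) ℝ)
    (W : Matrix (Fin n) (Fin (n - k)) ℝ) (W' : Matrix (Fin n) (Fin (n - k - 1)) ℝ)
    (f : Fin (n - k - 1) → Fin (n - k)) (hf : Function.Injective f)
    (hW' : W' = W.submatrix id f)
    (hmin : 0 < sigmaMin (L * W)) :
    sigmaMax (L * W') / sigmaMin (L * W') ≤ sigmaMax (L * W) / sigmaMin (L * W) := by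
  have hLW' : L * W' = (L * W).submatrix id f := by
    rw [hW', submatrix_mul L W id id f bijective_id, submatrix_id_id]
  rw [hLW']
  exact sigmaMax_div_sigmaMin_submatrix_le (L * W) hf hmin

/-- Theorem 3.2: if `W'` is obtained from `W` by deleting one column and
`σ_min(LW) > 0`, then `κ(LW') = σ_max(LW')/σ_min(LW') ≤ σ_max(LW)/σ_min(LW) = κ(LW)`:
the condition number of the inner least squares coefficient matrix is
non-increasing in `k`. -/
theorem condition_number_nonincreasing
    (n k p : ℕ) (hn : 0 < n) (hk2 : 2 ≤ k) (hkn : k ≤ n - 2) (hp : n - k ≤ p)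
    (L : Matrix (Fin p) (Fin n) ℝ)
    (W : Matrix (Fin n) (Fin (n - k)) ℝ) (W' : Matrix (Fin n) (Fin (n - k - 1)) ℝ)
    (f : Fin (n - k - 1) → Fin (n - k)) (hf : Function.Injective f)
    (hW' : W' = W.submatrix id f)
    (hmin : 0 < sigmaMin (L * W)) :
    sigmaMax (L * W') / sigmaMin (L * W') ≤ sigmaMax (L * W) / sigmaMin (L * W) :=
  condition_number_nonincreasing_general n k p L W W' f hf hW' hmin
end

section
/- Let m, n, k be positive integers, let A ∈ ℝ^{m×n}, let P ∈ ℝ^{m×(k+1)} and Q ∈ ℝ^{n×(k+1)} have orthonormal columns (PᵀP = I_{k+1}, QᵀQ = I_{k+1}), let Q_k ∈ ℝ^{n×k} be the matrix of the first k columns of Q and q_{k+1} ∈ ℝⁿ the last column of Q, let B_k ∈ ℝ^{(k+1)×k}, and let α_{k+1}, β_{k+1} ∈ ℝ. Assume the Golub–Kahan relations: A Q_k = P B_k, Aᵀ P = Q_k B_kᵀ + α_{k+1} q_{k+1} (e_{k+1})ᵀ, and (e_{k+1})ᵀ B_k = β_{k+1} (e_k)ᵀ (the last row of B_k is β_{k+1}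 times the k-th standard basis row vector). Then Qᵀ Aᵀ A Q_k equals the (k+1)×k matrix whose first k rows are B_kᵀ B_k and whose last row is α_{k+1} β_{k+1} (e_k)ᵀ. -/
/-!
Substituting `A Q_k = P B_k` and then the second Golub–Kahan relation gives
`Qᵀ Aᵀ A Q_k = (Qᵀ Q_k) B_kᵀ B_k + α_{k+1} (Qᵀ q_{k+1}) (e_{k+1}ᵀ B_k)`. Orthonormality of the
columns of `Q` turns `Qᵀ Q_k` into the first `k` columns of the identity and `Qᵀ q_{k+1}` into
`e_{k+1}`, and `e_{k+1}ᵀ B_k = β_{k+1} e_kᵀ` is the last row of `B_k`.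
-/

open Matrix

namespace Matrix

variable {l m n p o R : Type*} [Fintype n] [CommSemiring R]

theorem transpose_mul_submatrix_id_of_transpose_mul_self [DecidableEq p] {Q : Matrix n p R}
    (hQ : Qᵀ * Q = 1) (f : o → p) :
    Qᵀ * Q.submatrix id f = (1 : Matrix p p R).submatrix id f := by
  rw [← hQ, submatrix_mul Qᵀ Q id id f Function.bijective_id, submatrix_id_id]

theorem transpose_mulVec_col_of_transpose_mul_self [Fintype p] [DecidableEq p]
    {Q : Matrix n p R} (hQ : Qᵀ * Q = 1) (j : p) : Qᵀ *ᵥ Q.col j = Pi.single j 1 := by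
  rw [← mulVec_single_one, mulVec_mulVec, hQ, one_mulVec]

theorem mul_transpose_mul_mul_eq_of_golubKahan [Fintype m] [Fintype p] [Fintype o]
    (W : Matrix l n R) (A : Matrix m n R) (P : Matrix m p R) (Qk : Matrix n o R)
    (B : Matrix p o R) (q : n → R) (v : p → R) (α : R)
    (h1 : A * Qk = P * B) (h2 : Aᵀ * P = Qk * Bᵀ + α • vecMulVec q v) :
    W * Aᵀ * A * Qk = W * Qk * (Bᵀ * B) + α • vecMulVec (W *ᵥ q) (v ᵥ* B) := by
  rw [Matrix.mul_assoc (W * Aᵀ), h1, Matrix.mul_assoc W, ← Matrix.mul_assoc Aᵀ, h2]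
  simp only [Matrix.add_mul, Matrix.mul_add, Matrix.smul_mul, Matrix.mul_smul, Matrix.mul_assoc,
    vecMulVec_mul, mul_vecMulVec]

end Matrix

theorem golub_kahan_projected_normal_operator_general
    (m n k : ℕ)
    (A : Matrix (Fin m) (Fin n) ℝ)
    (P : Matrix (Fin m) (Fin (k + 1)) ℝ) (Q : Matrix (Fin n) (Fin (k + 1)) ℝ)
    (Bk : Matrix (Fin (k + 1)) (Fin k) ℝ) (α β : ℝ)
    (hQ : Qᵀ * Q = 1)
    (Qk : Matrix (Fin n) (Fin k) ℝ)
    (hQk : Qk = Q.submatrix id Fin.castSucc)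
    (qlast : Fin n → ℝ) (hqlast : qlast = fun i => Q i (Fin.last k))
    (h1 : A * Qk = P * Bk)
    (h2 : Aᵀ * P = Qk * Bkᵀ + α • Matrix.vecMulVec qlast (Pi.single (Fin.last k) 1))
    (h3 : ∀ j : Fin k, Bk (Fin.last k) j = if (j : ℕ) = k - 1 then β else 0) :
    Qᵀ * Aᵀ * A * Qk =
      Matrix.of (fun (i : Fin (k + 1)) (j : Fin k) =>
        if hi : (i : ℕ) < k then (Bkᵀ * Bk) ⟨(i : ℕ), hi⟩ j
        else α * β * (if (j : ℕ) = k - 1 then 1 else 0)) := by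
  have hQq : Qᵀ *ᵥ qlast = Pi.single (Fin.last k) 1 :=
    hqlast ▸ transpose_mulVec_col_of_transpose_mul_self hQ (Fin.last k)
  rw [mul_transpose_mul_mul_eq_of_golubKahan Qᵀ A P Qk Bk qlast _ α h1 h2, hQq, hQk,
    transpose_mul_submatrix_id_of_transpose_mul_self hQ, single_one_vecMul]
  ext i j
  induction i using Fin.lastCases with
  | last => simp [h3, mul_apply, one_apply, vecMulVec_apply, (Fin.castSucc_ne_last _).symm]
  | cast i => simp [one_apply, mul_apply, vecMulVec_apply]

/-- Equation (2.9) of the paper: under the Golub–Kahan bidiagonalization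
relations `A Q_k = P B_k`, `Aᵀ P = Q_k B_kᵀ + α_{k+1} q_{k+1} e_{k+1}ᵀ`, and
`e_{k+1}ᵀ B_k = β_{k+1} e_kᵀ`, the projection `Qᵀ Aᵀ A Q_k` is the
`(k+1) × k` matrix whose first `k` rows are `B_kᵀ B_k` and whose last row is
`α_{k+1} β_{k+1} e_kᵀ`. -/
theorem golub_kahan_projected_normal_operator
    (m n k : ℕ) (hm : 0 < m) (hn : 0 < n) (hk : 0 < k)
    (A : Matrix (Fin m) (Fin n) ℝ)
    (P : Matrix (Fin m) (Fin (k + 1)) ℝ) (Q : Matrix (Fin n) (Fin (k + 1)) ℝ)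
    (Bk : Matrix (Fin (k + 1)) (Fin k) ℝ) (α β : ℝ)
    (hP : Pᵀ * P = 1) (hQ : Qᵀ * Q = 1)
    (Qk : Matrix (Fin n) (Fin k) ℝ)
    (hQk : Qk = Q.submatrix id Fin.castSucc)
    (qlast : Fin n → ℝ) (hqlast : qlast = fun i => Q i (Fin.last k))
    (h1 : A * Qk = P * Bk)
    (h2 : Aᵀ * P = Qk * Bkᵀ + α • Matrix.vecMulVec qlast (Pi.single (Fin.last k) 1))
    (h3 : ∀ j : Fin k, Bk (Fin.last k) j = if (j : ℕ) = k - 1 then β else 0) :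
    Qᵀ * Aᵀ * A * Qk =
      Matrix.of (fun (i : Fin (k + 1)) (j : Fin k) =>
        if hi : (i : ℕ) < k then (Bkᵀ * Bk) ⟨(i : ℕ), hi⟩ j
        else α * β * (if (j : ℕ) = k - 1 then 1 else 0)) :=
  golub_kahan_projected_normal_operator_general m n k A P Q Bk α β hQ Qk hQk qlast hqlast h1 h2 h3
end

section
/- Let m, n, k be positive integers, let A ∈ ℝ^{m×n}, let P ∈ ℝ^{m×(k+1)} and Q ∈ ℝ^{n×(k+1)} have orthonormal columns (PᵀP = I_{k+1}, QᵀQ = I_{k+1}), let Q_k ∈ ℝ^{n×k} be the first k columns of Q, q₁ ∈ ℝⁿ the first column of Q, q_{k+1} ∈ ℝⁿ the last column of Q, p₁ ∈ ℝ^m the first column of P, let B_k ∈ ℝ^{(k+1)×k}, and let α₁, β₁, α_{k+1}, β_{k+1} ∈ ℝ. Assume: A Q_k = P B_k; Aᵀ P = Q_k B_kᵀ + α_{k+1} q_{k+1} (e_{k+1})ᵀ; (e_{k+1})ᵀ B_k = β_{k+1} (e_k)ᵀ; b = β₁ p₁; and Aᵀ p₁ = α₁ q₁. Let C ∈ ℝ^{(k+1)×k}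 be the matrix whose first k rows are B_kᵀB_k and whose last row is α_{k+1} β_{k+1} (e_k)ᵀ. Then for every y ∈ ℝ^k, ‖Aᵀ(b − A Q_k y)‖ = ‖α₁ β₁ e₁ − C y‖. Consequently, y minimizes ‖C y − α₁β₁ e₁‖ over ℝ^k if and only if x = Q_k y minimizes ‖Aᵀ(b − Ax)‖ over the column space of Q_k. -/
open Matrix

noncomputable def enorm {d : ℕ} (v : Fin d → ℝ) : ℝ := Real.sqrt (∑ i, v i ^ 2)

/-!
The Golub–Kahan relations give the matrix identity `Aᵀ A Q_k = Q C`: indeed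
`Aᵀ A Q_k = Aᵀ P B_k = Q_k B_kᵀ B_k + α_{k+1} q_{k+1} (e_{k+1}ᵀ B_k)`, and the last term is
`q_{k+1}` times the last row `α_{k+1} β_{k+1} e_kᵀ` of `C`. Together with
`Aᵀ b = α₁ β₁ q₁ = Q (α₁ β₁ e₁)` this shows `Aᵀ (b − A Q_k y) = Q (α₁ β₁ e₁ − C y)`, and `Q`
preserves Euclidean norms because its columns are orthonormal. The statement about minimizers
follows since `y ↦ Q_k y` parametrizes the column space of `Q_k`.
-/

lemma enorm_eq_sqrt_dotProduct {d : ℕ} (v : Fin d → ℝ) : _root_.enorm v = √(v ⬝ᵥ v) := by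
  simp only [_root_.enorm, dotProduct, sq]

lemma enorm_sub_comm {d : ℕ} (u v : Fin d → ℝ) : _root_.enorm (u - v) = _root_.enorm (v - u) := by
  rw [enorm_eq_sqrt_dotProduct, enorm_eq_sqrt_dotProduct, ← neg_sub, dotProduct_neg,
    neg_dotProduct, neg_neg]

lemma enorm_mulVec_of_transpose_mul_self {d e : ℕ} {Q : Matrix (Fin d) (Fin e) ℝ}
    (hQ : Qᵀ * Q = 1) (w : Fin e → ℝ) : _root_.enorm (Q *ᵥ w) = _root_.enorm w := by
  rw [enorm_eq_sqrt_dotProduct, enorm_eq_sqrt_dotProduct, dotProduct_mulVec, ← mulVec_transpose,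
    mulVec_mulVec, hQ, one_mulVec]

lemma Matrix.mul_eq_mul_castSucc_add_vecMulVec_last {ι κ R : Type*} [CommSemiring R] {k : ℕ}
    (Q : Matrix ι (Fin (k + 1)) R) (C : Matrix (Fin (k + 1)) κ R) :
    Q * C = Q.submatrix id Fin.castSucc * C.submatrix Fin.castSucc id +
      vecMulVec (Q.col (Fin.last k)) (C.row (Fin.last k)) := by
  ext i j
  simp [mul_apply, Fin.sum_univ_castSucc, vecMulVec_apply]

lemma forall_le_iff_forall_range_le_of_comp_eq {α β γ : Type*} [LE γ] {f : α → γ} {g : β → γ}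
    {φ : α → β} (h : ∀ y, g (φ y) = f y) (y : α) :
    (∀ y', f y ≤ f y') ↔ ∀ x, (∃ y', x = φ y') → g (φ y) ≤ g x := by
  constructor
  · rintro hy x ⟨y', rfl⟩
    simpa only [h] using hy y'
  · intro hy y'
    simpa only [h] using hy (φ y') ⟨y', rfl⟩

theorem lsmr_subproblem_equivalence_general
    (m n k : ℕ)
    (A : Matrix (Fin m) (Fin n) ℝ) (b : Fin m → ℝ)
    (P : Matrix (Fin m) (Fin (k + 1)) ℝ) (Q : Matrix (Fin n) (Fin (k + 1)) ℝ)
    (Bk : Matrix (Fin (k + 1)) (Fin k) ℝ) (α₁ β₁ α β : ℝ)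
    (hQ : Qᵀ * Q = 1)
    (Qk : Matrix (Fin n) (Fin k) ℝ)
    (hQk : Qk = Q.submatrix id Fin.castSucc)
    (q₁ : Fin n → ℝ) (hq₁ : q₁ = fun i => Q i 0)
    (qlast : Fin n → ℝ) (hqlast : qlast = fun i => Q i (Fin.last k))
    (p₁ : Fin m → ℝ)
    (h1 : A * Qk = P * Bk)
    (h2 : Aᵀ * P = Qk * Bkᵀ + α • Matrix.vecMulVec qlast (Pi.single (Fin.last k) 1))
    (h3 : ∀ j : Fin k, Bk (Fin.last k) j = if (j : ℕ) = k - 1 then β else 0)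
    (hb : b = β₁ • p₁)
    (hAp₁ : Aᵀ.mulVec p₁ = α₁ • q₁)
    (C : Matrix (Fin (k + 1)) (Fin k) ℝ)
    (hC : C = Matrix.of (fun (i : Fin (k + 1)) (j : Fin k) =>
        if hi : (i : ℕ) < k then (Bkᵀ * Bk) ⟨(i : ℕ), hi⟩ j
        else α * β * (if (j : ℕ) = k - 1 then 1 else 0))) :
    (∀ y : Fin k → ℝ,
      _root_.enorm (Aᵀ.mulVec (b - A.mulVec (Qk.mulVec y))) =
        _root_.enorm ((α₁ * β₁) • (Pi.single 0 1 : Fin (k + 1) → ℝ) - C.mulVec y)) ∧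
    (∀ y : Fin k → ℝ,
      (∀ y' : Fin k → ℝ,
          _root_.enorm (C.mulVec y - (α₁ * β₁) • (Pi.single 0 1 : Fin (k + 1) → ℝ)) ≤
            _root_.enorm (C.mulVec y' - (α₁ * β₁) • (Pi.single 0 1 : Fin (k + 1) → ℝ))) ↔
        ∀ x : Fin n → ℝ, (∃ y' : Fin k → ℝ, x = Qk.mulVec y') →
          _root_.enorm (Aᵀ.mulVec (b - A.mulVec (Qk.mulVec y))) ≤
            _root_.enorm (Aᵀ.mulVec (b - A.mulVec x))) := by
  have hC_init : C.submatrix Fin.castSucc id = Bkᵀ * Bk := by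
    ext i j
    simp [hC]
  have hC_last : C.row (Fin.last k) = α • Bk.row (Fin.last k) := by
    ext j
    rw [Pi.smul_apply, row_apply, row_apply, h3, hC]
    simp
  have normal_eq : Aᵀ * A * Qk = Q * C := by
    rw [Matrix.mul_assoc, h1, ← Matrix.mul_assoc, h2, Matrix.add_mul, Matrix.mul_assoc, smul_mul,
      vecMulVec_mul, single_one_vecMul, Q.mul_eq_mul_castSucc_add_vecMulVec_last, hC_init, hC_last,
      vecMulVec_smul, ← hQk, hqlast]
    rfl
  have normal_rhs : Aᵀ *ᵥ b = Q *ᵥ ((α₁ * β₁) • Pi.single 0 1) := by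
    rw [hb, mulVec_smul, hAp₁, mulVec_smul, mulVec_single_one, smul_smul, mul_comm, hq₁]
    rfl
  have residual (y : Fin k → ℝ) :
      Aᵀ *ᵥ (b - A *ᵥ (Qk *ᵥ y)) = Q *ᵥ ((α₁ * β₁) • Pi.single 0 1 - C *ᵥ y) := by
    rw [mulVec_sub, mulVec_sub, mulVec_mulVec, mulVec_mulVec, normal_eq,
      normal_rhs, mulVec_mulVec]
  have norm_residual (y : Fin k → ℝ) : _root_.enorm (Aᵀ *ᵥ (b - A *ᵥ (Qk *ᵥ y))) =
      _root_.enorm ((α₁ * β₁) • Pi.single 0 1 - C *ᵥ y) := by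
    rw [residual, enorm_mulVec_of_transpose_mul_self hQ]
  have norm_residual_rev (y : Fin k → ℝ) : _root_.enorm (Aᵀ *ᵥ (b - A *ᵥ (Qk *ᵥ y))) =
      _root_.enorm (C *ᵥ y - (α₁ * β₁) • Pi.single 0 1) := by
    rw [norm_residual, enorm_sub_comm]
  exact ⟨norm_residual, forall_le_iff_forall_range_le_of_comp_eq
    (g := fun x => _root_.enorm (Aᵀ *ᵥ (b - A *ᵥ x))) (φ := (Qk *ᵥ ·)) norm_residual_rev⟩

/-- The equivalence between the LSMR subproblem (2.6) and the projected residual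
minimization (2.5): under the Golub–Kahan relations with `b = β₁ p₁` and
`Aᵀ p₁ = α₁ q₁`, for every `y` one has
`‖Aᵀ(b − A Q_k y)‖ = ‖α₁β₁ e₁ − C y‖`, where `C` has first `k` rows `B_kᵀB_k`
and last row `α_{k+1} β_{k+1} e_kᵀ`; consequently `y` minimizes
`‖C y − α₁β₁ e₁‖` iff `x = Q_k y` minimizes `‖Aᵀ(b − A x)‖` over the column
space of `Q_k`. -/
theorem lsmr_subproblem_equivalence
    (m n k : ℕ) (hm : 0 < m) (hn : 0 < n) (hk : 0 < k)
    (A : Matrix (Fin m) (Fin n) ℝ) (b : Fin m → ℝ)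
    (P : Matrix (Fin m) (Fin (k + 1)) ℝ) (Q : Matrix (Fin n) (Fin (k + 1)) ℝ)
    (Bk : Matrix (Fin (k + 1)) (Fin k) ℝ) (α₁ β₁ α β : ℝ)
    (hP : Pᵀ * P = 1) (hQ : Qᵀ * Q = 1)
    (Qk : Matrix (Fin n) (Fin k) ℝ)
    (hQk : Qk = Q.submatrix id Fin.castSucc)
    (q₁ : Fin n → ℝ) (hq₁ : q₁ = fun i => Q i 0)
    (qlast : Fin n → ℝ) (hqlast : qlast = fun i => Q i (Fin.last k))
    (p₁ : Fin m → ℝ) (hp₁ : p₁ = fun i => P i 0)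
    (h1 : A * Qk = P * Bk)
    (h2 : Aᵀ * P = Qk * Bkᵀ + α • Matrix.vecMulVec qlast (Pi.single (Fin.last k) 1))
    (h3 : ∀ j : Fin k, Bk (Fin.last k) j = if (j : ℕ) = k - 1 then β else 0)
    (hb : b = β₁ • p₁)
    (hAp₁ : Aᵀ.mulVec p₁ = α₁ • q₁)
    (C : Matrix (Fin (k + 1)) (Fin k) ℝ)
    (hC : C = Matrix.of (fun (i : Fin (k + 1)) (j : Fin k) =>
        if hi : (i : ℕ) < k then (Bkᵀ * Bk) ⟨(i : ℕ), hi⟩ j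
        else α * β * (if (j : ℕ) = k - 1 then 1 else 0))) :
    (∀ y : Fin k → ℝ,
      _root_.enorm (Aᵀ.mulVec (b - A.mulVec (Qk.mulVec y))) =
        _root_.enorm ((α₁ * β₁) • (Pi.single 0 1 : Fin (k + 1) → ℝ) - C.mulVec y)) ∧
    (∀ y : Fin k → ℝ,
      (∀ y' : Fin k → ℝ,
          _root_.enorm (C.mulVec y - (α₁ * β₁) • (Pi.single 0 1 : Fin (k + 1) → ℝ)) ≤
            _root_.enorm (C.mulVec y' - (α₁ * β₁) • (Pi.single 0 1 : Fin (k + 1) → ℝ))) ↔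
        ∀ x : Fin n → ℝ, (∃ y' : Fin k → ℝ, x = Qk.mulVec y') →
          _root_.enorm (Aᵀ.mulVec (b - A.mulVec (Qk.mulVec y))) ≤
            _root_.enorm (Aᵀ.mulVec (b - A.mulVec x))) :=
  lsmr_subproblem_equivalence_general m n k A b P Q Bk α₁ β₁ α β hQ Qk hQk q₁ hq₁ qlast hqlast p₁ h1
    h2 h3 hb hAp₁ C hC
end
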